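/- Let a ∈ (0,1] and let S ⊆ Lim(ω₁) be stationary with S = S₁ ∪ S₂. If ♣_S^{inf≥a} holds, then ♣_{S₁}^{inf≥a} holds or ♣_{S₂}^{inf≥a} holds (where the principle for a non-stationary index set is taken to fail). -/

import Mathlib

open Filter Set

noncomputable def omega1 : Ordinal.{0} := (Cardinal.aleph 1).ord

/-- The set of countable limit ordinals, `Lim(ω₁)`. -/
def limOmega1 : Set Ordinal.{0} := {δ | δ < omega1 ∧ Order.IsSuccLimit δ}

/-- `C` is a closed unbounded subset of `ω₁`. -/
def IsClubIn (C : Set Ordinal.{0}) : Prop :=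
  C ⊆ Set.Iio omega1 ∧
  (∀ δ, δ < omega1 → Order.IsSuccLimit δ → (∀ β < δ, ∃ γ ∈ C, β < γ ∧ γ < δ) → δ ∈ C) ∧
  (∀ β, β < omega1 → ∃ γ ∈ C, β < γ)

/-- `S` is a stationary subset of `ω₁`. -/
def IsStatIn (S : Set Ordinal.{0}) : Prop :=
  S ⊆ Set.Iio omega1 ∧ ∀ C, IsClubIn C → (S ∩ C).Nonempty

open scoped Classical in
/-- `|{k < n : α k ∈ A}| / n` as a real number. -/
noncomputable def hitRatio (α : ℕ → Ordinal.{0}) (A : Set Ordinal.{0}) (n : ℕ) : ℝ :=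
  ((Finset.range n).filter (fun k => α k ∈ A)).card / n

/-- `α` assigns to each `δ ∈ S` a strictly increasing sequence cofinal in `δ`. -/
def GoodSeq (S : Set Ordinal.{0}) (α : Ordinal.{0} → ℕ → Ordinal.{0}) : Prop :=
  ∀ δ ∈ S, StrictMono (α δ) ∧ (∀ n, α δ n < δ) ∧ (∀ β < δ, ∃ n, β < α δ n)

/-- The principle `♣_S^{inf ≥ a}`. -/
def ClubSuitInf (S : Set Ordinal.{0}) (a : ℝ) : Prop :=
  ∃ α : Ordinal.{0} → ℕ → Ordinal.{0}, GoodSeq S α ∧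
    ∀ A : Set Ordinal.{0}, A ⊆ Set.Iio omega1 → ¬ A.Countable →
      ∃ δ ∈ S, a ≤ Filter.liminf (hitRatio (α δ) A) Filter.atTop

/-- The principle `♣_S^{sup ≥ a}`. -/
def ClubSuitSup (S : Set Ordinal.{0}) (a : ℝ) : Prop :=
  ∃ α : Ordinal.{0} → ℕ → Ordinal.{0}, GoodSeq S α ∧
    ∀ A : Set Ordinal.{0}, A ⊆ Set.Iio omega1 → ¬ A.Countable →
      ∃ δ ∈ S, a ≤ Filter.limsup (hitRatio (α δ) A) Filter.atTop

/-- The diamond principle `◊` on `ω₁`. -/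
def DiamondOmega1 : Prop :=
  ∃ B : Ordinal.{0} → Set Ordinal.{0}, (∀ δ ∈ limOmega1, B δ ⊆ Set.Iio δ) ∧
    ∀ A : Set Ordinal.{0}, A ⊆ Set.Iio omega1 →
      IsStatIn {δ ∈ limOmega1 | A ∩ Set.Iio δ = B δ}

/-!
If `α` already guesses on `S₁` we are done; otherwise some uncountable `A₁` is guessed by `α`
only at points of `S₂`. Let `f` enumerate `A₁` increasingly. An uncountable `A` is carried by `f`
into `A₁`; after thinning `f '' A` so that its accumulation points are closure points of `f`, it is
guessed at some `δ`, necessarily in `S₂`. There the terms of `α δ` in the range of `f`, pulled back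
along `f`, are cofinal in `δ`, and along a subsequence their hit ratio for `A` dominates that of
`α δ` for `f '' A`. Stationarity is automatic: a club is guessed at a point where it accumulates,
which therefore lies in it.
-/

open scoped Ordinal

lemma omega1_eq_omega_one : omega1 = ω₁ := Cardinal.ord_aleph 1

lemma omega1_isSuccLimit : Order.IsSuccLimit omega1 :=
  Cardinal.isSuccLimit_ord (by simp)

lemma countable_Iio_of_lt_omega1 {b : Ordinal.{0}} (hb : b < omega1) : (Iio b).Countable := by
  rw [← Cardinal.le_aleph0_iff_set_countable, Cardinal.mk_Iio_ordinal, Cardinal.lift_le_aleph0,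
    ← Cardinal.lt_aleph_one_iff]
  exact Cardinal.lt_ord.mp hb

lemma Set.Countable.exists_lt_omega1_forall_lt {X : Set Ordinal.{0}} (hX : X ⊆ Iio omega1)
    (hc : X.Countable) : ∃ b < omega1, ∀ x ∈ X, x < b := by
  have : Countable X := hc.to_subtype
  refine ⟨⨆ x : X, Order.succ x.1, ?_, fun x hx => ?_⟩
  · have hsucc := fun x : X => omega1_isSuccLimit.succ_lt (hX x.2)
    rw [omega1_eq_omega_one] at hsucc ⊢
    exact Ordinal.iSup_lt_omega_one hsucc
  · exact (Order.lt_succ x).trans_le (Ordinal.le_iSup (fun x : X => Order.succ x.1) ⟨x, hx⟩)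

lemma not_countable_iff_forall_exists_gt {X : Set Ordinal.{0}} (hX : X ⊆ Iio omega1) :
    ¬ X.Countable ↔ ∀ b < omega1, ∃ x ∈ X, b < x := by
  constructor
  · intro hX' b hb
    by_contra! hle
    exact hX' ((countable_Iio_of_lt_omega1 (omega1_isSuccLimit.succ_lt hb)).mono
      fun x hx => Order.lt_succ_iff.mpr (hle x hx))
  · intro hub hc
    obtain ⟨b, hb, hbX⟩ := hc.exists_lt_omega1_forall_lt hX
    obtain ⟨x, hx, hbx⟩ := hub b hb
    exact (hbX x hx).not_gt hbx

section HitRatio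

variable (α : ℕ → Ordinal.{0}) (A : Set Ordinal.{0})

lemma hitRatio_nonneg (n : ℕ) : 0 ≤ hitRatio α A n := by
  unfold hitRatio; positivity

lemma hitRatio_le_one (n : ℕ) : hitRatio α A n ≤ 1 := by
  classical
  unfold hitRatio
  rcases Nat.eq_zero_or_pos n with rfl | hn
  · simp
  · rw [div_le_one (by exact_mod_cast hn)]
    exact_mod_cast (Finset.card_filter_le _ _).trans (by simp)

lemma isBoundedUnder_ge_hitRatio (l : Filter ℕ) : l.IsBoundedUnder (· ≥ ·) (hitRatio α A) :=
  isBoundedUnder_of ⟨0, hitRatio_nonneg α A⟩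

lemma isCoboundedUnder_ge_hitRatio (l : Filter ℕ) [l.NeBot] :
    l.IsCoboundedUnder (· ≥ ·) (hitRatio α A) :=
  (isBoundedUnder_of ⟨1, hitRatio_le_one α A⟩).isCoboundedUnder_ge

variable {α A}

lemma hitRatio_mono {B : Set Ordinal.{0}} (h : A ⊆ B) (n : ℕ) :
    hitRatio α A n ≤ hitRatio α B n := by
  unfold hitRatio
  gcongr

lemma liminf_hitRatio_mono {B : Set Ordinal.{0}} (h : A ⊆ B) :
    liminf (hitRatio α A) atTop ≤ liminf (hitRatio α B) atTop :=
  liminf_le_liminf (.of_forall (hitRatio_mono h)) (isBoundedUnder_ge_hitRatio α A _)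
    (isCoboundedUnder_ge_hitRatio α B _)

lemma tendsto_hitRatio_zero_of_finite (hfin : {k | α k ∈ A}.Finite) :
    Tendsto (hitRatio α A) atTop (nhds 0) := by
  refine squeeze_zero (hitRatio_nonneg α A) (fun n => ?_)
    (tendsto_const_div_atTop_nhds_zero_nat (hfin.toFinset.card : ℝ))
  classical
  unfold hitRatio
  gcongr
  intro k hk
  simpa using (Finset.mem_filter.mp hk).2

lemma infinite_of_le_liminf_hitRatio {a : ℝ} (ha : 0 < a)
    (hlim : a ≤ liminf (hitRatio α A) atTop) : {k | α k ∈ A}.Infinite := by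
  intro hfin
  rw [(tendsto_hitRatio_zero_of_finite hfin).liminf_eq] at hlim
  exact hlim.not_gt ha

end HitRatio

def CofinalBelow (A : Set Ordinal.{0}) (δ : Ordinal.{0}) : Prop :=
  ∀ β < δ, ∃ x ∈ A, β < x ∧ x < δ

lemma cofinalBelow_of_le_liminf_hitRatio {α : ℕ → Ordinal.{0}} {A : Set Ordinal.{0}} {a : ℝ}
    {δ : Ordinal.{0}} (ha : 0 < a) (hmono : StrictMono α) (hlt : ∀ n, α n < δ)
    (hcof : ∀ β < δ, ∃ n, β < α n) (hlim : a ≤ liminf (hitRatio α A) atTop) :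
    CofinalBelow A δ := by
  intro β hβ
  obtain ⟨n, hn⟩ := hcof β hβ
  obtain ⟨k, hk, hnk⟩ := (infinite_of_le_liminf_hitRatio ha hlim).exists_gt n
  exact ⟨α k, hk, hn.trans (hmono hnk), hlt k⟩

def Guesses (S : Set Ordinal.{0}) (a : ℝ) (α : Ordinal.{0} → ℕ → Ordinal.{0}) : Prop :=
  ∀ A : Set Ordinal.{0}, A ⊆ Iio omega1 → ¬ A.Countable →
    ∃ δ ∈ S, a ≤ liminf (hitRatio (α δ) A) atTop

lemma IsClubIn.not_countable {C : Set Ordinal.{0}} (hC : IsClubIn C) : ¬ C.Countable :=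
  (not_countable_iff_forall_exists_gt hC.1).mpr hC.2.2

lemma IsClubIn.mem_of_cofinalBelow {C : Set Ordinal.{0}} (hC : IsClubIn C) {δ : Ordinal.{0}}
    (hδ : δ ∈ limOmega1) (hcof : CofinalBelow C δ) : δ ∈ C :=
  hC.2.1 δ hδ.1 hδ.2 hcof

lemma IsStatIn.of_guesses {S : Set Ordinal.{0}} (hS : S ⊆ limOmega1)
    {α : Ordinal.{0} → ℕ → Ordinal.{0}} (hgood : GoodSeq S α) {a : ℝ} (ha : 0 < a)
    (hguess : Guesses S a α) : IsStatIn S := by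
  refine ⟨fun δ hδ => (hS hδ).1, fun C hC => ?_⟩
  obtain ⟨δ, hδS, hδ⟩ := hguess C hC.1 hC.not_countable
  obtain ⟨hmono, hlt, hcof⟩ := hgood δ hδS
  exact ⟨δ, hδS, hC.mem_of_cofinalBelow (hS hδS)
    (cofinalBelow_of_le_liminf_hitRatio ha hmono hlt hcof hδ)⟩

/-- Keep only the first element of `B` above each point of `C`: these elements are separated by
points of `C`, so their limits are limits of `C`. -/
lemma IsClubIn.exists_subset_not_countable {C B : Set Ordinal.{0}} (hC : IsClubIn C)
    (hB : B ⊆ Iio omega1) (hBu : ¬ B.Countable) :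
    ∃ B' ⊆ B, ¬ B'.Countable ∧ ∀ δ ∈ limOmega1, CofinalBelow B' δ → δ ∈ C := by
  refine ⟨{x | x ∈ B ∧ ∃ c ∈ C, c < x ∧ ∀ y ∈ B, y < x → y ≤ c}, fun x hx => hx.1, ?_, ?_⟩
  · refine (not_countable_iff_forall_exists_gt fun x hx => hB hx.1).mpr fun b hb => ?_
    obtain ⟨c, hcC, hbc⟩ := hC.2.2 b hb
    obtain ⟨x, hxB, hcx⟩ := (not_countable_iff_forall_exists_gt hB).mp hBu c (hC.1 hcC)
    have hne : {x | x ∈ B ∧ c < x}.Nonempty := ⟨x, hxB, hcx⟩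
    obtain ⟨hmB, hcm⟩ := csInf_mem hne
    refine ⟨_, ⟨hmB, c, hcC, hcm, fun y hyB hym => ?_⟩, hbc.trans hcm⟩
    by_contra! hcy
    exact hym.not_ge (csInf_le' ⟨hyB, hcy⟩)
  · intro δ hδ hcof
    refine hC.mem_of_cofinalBelow hδ fun b hb => ?_
    obtain ⟨x₁, hx₁, hbx₁, hx₁δ⟩ := hcof b hb
    obtain ⟨x₂, ⟨-, c, hcC, hcx₂, hbelow⟩, hx₁x₂, hx₂δ⟩ := hcof x₁ hx₁δ
    exact ⟨c, hcC, hbx₁.trans_le (hbelow x₁ hx₁.1 hx₁x₂), hcx₂.trans hx₂δ⟩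

lemma isClubIn_closurePoints {f : Ordinal.{0} → Ordinal.{0}}
    (hf : ∀ ξ < omega1, f ξ < omega1) : IsClubIn {δ | δ < omega1 ∧ ∀ ξ < δ, f ξ < δ} := by
  refine ⟨fun δ hδ => hδ.1, fun δ hδ _ hcof => ⟨hδ, fun ξ hξ => ?_⟩, fun b hb => ?_⟩
  · obtain ⟨γ, hγ, hξγ, hγδ⟩ := hcof ξ hξ
    exact (hγ.2 ξ hξγ).trans hγδ
  · have hstep : ∀ x < omega1, ∃ y < omega1, x < y ∧ ∀ ξ < x, f ξ < y := by
      intro x hx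
      obtain ⟨y, hy, hxy⟩ := (countable_Iio_of_lt_omega1 hx |>.image f |>.insert x)
        |>.exists_lt_omega1_forall_lt
          (by rintro _ (rfl | ⟨ξ, hξ, rfl⟩); exacts [hx, hf ξ (hξ.trans hx)])
      exact ⟨y, hy, hxy x (mem_insert x _), fun ξ hξ => hxy _ (mem_insert_of_mem x ⟨ξ, hξ, rfl⟩)⟩
    choose! g hg using hstep
    -- the supremum of the orbit `b, g b, g (g b), …` is a closure point of `f`
    have horbit : ∀ n, g^[n] b < omega1 := fun n => by
      induction n with
      | zero => exact hb
      | succ n ih => rw [Function.iterate_succ_apply']; exact (hg _ ih).1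
    have hle : ∀ n, g^[n] b ≤ ⨆ n, g^[n] b := Ordinal.le_iSup _
    refine ⟨⨆ n, g^[n] b, ⟨?_, fun ξ hξ => ?_⟩, (hg b hb).2.1.trans_le (hle 1)⟩
    · rw [omega1_eq_omega_one] at horbit ⊢
      exact Ordinal.iSup_lt_omega_one horbit
    · obtain ⟨n, hn⟩ := (Ordinal.lt_iSup_iff).mp hξ
      have := (hg _ (horbit n)).2.2 ξ hn
      rw [← Function.iterate_succ_apply' g] at this
      exact this.trans_le (hle _)

/-- The increasing enumeration of `A`; the ordinals `≥ ω₁` are added only to make the set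
unbounded, as `Ordinal.enumOrd` requires. -/
lemma exists_strictMono_mem_of_not_countable {A : Set Ordinal.{0}} (hA : A ⊆ Iio omega1)
    (hAu : ¬ A.Countable) :
    ∃ f : Ordinal.{0} → Ordinal.{0}, StrictMono f ∧ ∀ ξ < omega1, f ξ ∈ A := by
  have hunb : ¬ BddAbove (A ∪ Ici omega1) := fun ⟨b, hb⟩ =>
    have hmem : Order.succ (max omega1 b) ∈ A ∪ Ici omega1 :=
      Or.inr (mem_Ici.mpr ((le_max_left _ _).trans (Order.le_succ _)))
    (Order.lt_succ (max omega1 b)).not_ge ((hb hmem).trans (le_max_right _ _))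
  set f := Ordinal.enumOrd (A ∪ Ici omega1)
  have hflt : ∀ ξ < omega1, f ξ < omega1 := by
    intro ξ hξ
    induction ξ using WellFoundedLT.induction with
    | _ ξ ih =>
      obtain ⟨b, hb, hbf⟩ := (countable_Iio_of_lt_omega1 hξ |>.image f).exists_lt_omega1_forall_lt
        (by rintro _ ⟨η, hη, rfl⟩; exact ih η hη (hη.trans hξ))
      obtain ⟨x, hxA, hbx⟩ := (not_countable_iff_forall_exists_gt hA).mp hAu b hb
      exact (Ordinal.enumOrd_le_of_forall_lt (Or.inl hxA)
        fun η hη => (hbf _ ⟨η, hη, rfl⟩).trans hbx).trans_lt (hA hxA)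
  refine ⟨f, Ordinal.enumOrd_strictMono hunb, fun ξ hξ => ?_⟩
  exact (Ordinal.enumOrd_mem hunb ξ).resolve_right (hflt ξ hξ).not_ge

noncomputable def pullbackSeq (f : Ordinal.{0} → Ordinal.{0}) (α : ℕ → Ordinal.{0}) (n : ℕ) :
    Ordinal.{0} :=
  Function.invFun f (α (Nat.nth (fun k => α k ∈ range f) n))

section PullbackSeq

variable {f : Ordinal.{0} → Ordinal.{0}} {α : ℕ → Ordinal.{0}}

lemma apply_pullbackSeq (hinf : {k | α k ∈ range f}.Infinite) (n : ℕ) :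
    f (pullbackSeq f α n) = α (Nat.nth (fun k => α k ∈ range f) n) :=
  Function.invFun_eq (Nat.nth_mem_of_infinite hinf n)

lemma pullbackSeq_good (hf : StrictMono f) (hinf : {k | α k ∈ range f}.Infinite)
    (hmono : StrictMono α) {δ : Ordinal.{0}} (hlt : ∀ n, α n < δ) (hcof : ∀ β < δ, ∃ n, β < α n)
    (hclosed : ∀ ξ < δ, f ξ < δ) :
    StrictMono (pullbackSeq f α) ∧ (∀ n, pullbackSeq f α n < δ) ∧
      ∀ β < δ, ∃ n, β < pullbackSeq f α n := by
  refine ⟨fun m n hmn => ?_, fun n => ?_, fun β hβ => ?_⟩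
  · rw [← hf.lt_iff_lt, apply_pullbackSeq hinf, apply_pullbackSeq hinf]
    exact hmono (Nat.nth_strictMono hinf hmn)
  · exact hf.le_apply.trans_lt (apply_pullbackSeq hinf n ▸ hlt _)
  · obtain ⟨n, hn⟩ := hcof (f β) (hclosed β hβ)
    refine ⟨n, hf.lt_iff_lt.mp ?_⟩
    rw [apply_pullbackSeq hinf]
    exact hn.trans_le (hmono.monotone (Nat.le_nth fun hfin => (hinf hfin).elim))

/-- `Nat.count` injects the hits of `α` in `f '' A` into the hits of `pullbackSeq f α` in `A`. -/
lemma hitRatio_image_le_hitRatio_pullbackSeq (hf : Function.Injective f)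
    (hinf : {k | α k ∈ range f}.Infinite) (A : Set Ordinal.{0}) (m : ℕ) :
    hitRatio α (f '' A) (Nat.nth (fun k => α k ∈ range f) m + 1) ≤
      hitRatio (pullbackSeq f α) A (m + 1) := by
  classical
  set p := fun k => α k ∈ range f
  have hcard : ((Finset.range (Nat.nth p m + 1)).filter (fun k => α k ∈ f '' A)).card ≤
      ((Finset.range (m + 1)).filter (fun j => pullbackSeq f α j ∈ A)).card := by
    refine Finset.card_le_card_of_injOn (Nat.count p) (fun k hk => ?_) (fun k₁ hk₁ k₂ hk₂ he => ?_)
    · simp only [Finset.coe_filter, Finset.mem_range, mem_ofPred_eq] at hk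
      obtain ⟨hkm, x, hxA, hxk⟩ := hk
      simp only [Finset.coe_filter, Finset.mem_range, mem_ofPred_eq]
      refine ⟨Nat.lt_succ_of_le (Nat.le_nth_of_count_le (Nat.lt_succ_iff.mp hkm)), ?_⟩
      rwa [pullbackSeq, Nat.nth_count (show p k from ⟨x, hxk⟩), ← hxk,
        Function.leftInverse_invFun hf]
    · simp only [Finset.coe_filter, mem_ofPred_eq] at hk₁ hk₂
      have hp : ∀ {k}, α k ∈ f '' A → p k := fun ⟨x, _, hx⟩ => ⟨x, hx⟩
      rw [← Nat.nth_count (hp hk₁.2), ← Nat.nth_count (hp hk₂.2), he]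
  unfold hitRatio
  refine div_le_div₀ (by positivity) (by exact_mod_cast hcard) (by positivity) ?_
  exact_mod_cast Nat.succ_le_succ (Nat.le_nth fun hfin => (hinf hfin).elim)

lemma liminf_hitRatio_image_le (hf : Function.Injective f) (hinf : {k | α k ∈ range f}.Infinite)
    (A : Set Ordinal.{0}) :
    liminf (hitRatio α (f '' A)) atTop ≤ liminf (hitRatio (pullbackSeq f α) A) atTop := by
  set φ := fun m => Nat.nth (fun k => α k ∈ range f) m + 1
  have hφ : Tendsto φ atTop atTop := by
    refine tendsto_atTop_mono (fun m => ?_) tendsto_id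
    exact (Nat.le_nth fun hfin => (hinf hfin).elim).trans (Nat.le_succ _)
  calc liminf (hitRatio α (f '' A)) atTop
      ≤ liminf (hitRatio α (f '' A) ∘ φ) atTop :=
        hφ.liminf_le_liminf_comp (isCoboundedUnder_ge_hitRatio _ _ _)
          (isBoundedUnder_ge_hitRatio _ _ _)
    _ ≤ liminf (fun m => hitRatio (pullbackSeq f α) A (m + 1)) atTop :=
        liminf_le_liminf (.of_forall (hitRatio_image_le_hitRatio_pullbackSeq hf hinf A))
          (isBoundedUnder_of ⟨0, fun m => hitRatio_nonneg _ _ _⟩)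
          (isBoundedUnder_of ⟨1, fun m => hitRatio_le_one _ A (m + 1)⟩).isCoboundedUnder_ge
    _ = liminf (hitRatio (pullbackSeq f α) A) atTop := liminf_nat_add _ 1

end PullbackSeq

lemma ClubSuitInf.isStatIn {S : Set Ordinal.{0}} {a : ℝ} (hS : S ⊆ limOmega1) (ha : 0 < a)
    (h : ClubSuitInf S a) : IsStatIn S :=
  let ⟨_, hgood, hguess⟩ := h
  .of_guesses hS hgood ha hguess

theorem clubSuitInf_of_guesses_only_in {S T : Set Ordinal.{0}} {a : ℝ} (ha : 0 < a)
    (hS : S ⊆ limOmega1) (hTS : T ⊆ S) {α : Ordinal.{0} → ℕ → Ordinal.{0}}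
    (hgood : GoodSeq S α) (hguess : Guesses S a α) {A₁ : Set Ordinal.{0}}
    (hA₁ : A₁ ⊆ Iio omega1) (hA₁u : ¬ A₁.Countable)
    (honly : ∀ δ ∈ S, a ≤ liminf (hitRatio (α δ) A₁) atTop → δ ∈ T) : ClubSuitInf T a := by
  classical
  obtain ⟨f, hf, hfA₁⟩ := exists_strictMono_mem_of_not_countable hA₁ hA₁u
  set C := {δ | δ < omega1 ∧ ∀ ξ < δ, f ξ < δ}
  have hC : IsClubIn C := isClubIn_closurePoints fun ξ hξ => hA₁ (hfA₁ ξ hξ)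
  let β δ := if δ ∈ C ∧ {k | α δ k ∈ range f}.Infinite then pullbackSeq f (α δ) else α δ
  refine ⟨β, fun δ hδ => ?_, fun A hA hAu => ?_⟩
  · obtain ⟨hmono, hlt, hcof⟩ := hgood δ (hTS hδ)
    dsimp only [β]
    split_ifs with hpull
    · exact pullbackSeq_good hf hpull.2 hmono hlt hcof hpull.1.2
    · exact ⟨hmono, hlt, hcof⟩
  have himage : f '' A ⊆ A₁ := by rintro _ ⟨ξ, hξ, rfl⟩; exact hfA₁ ξ (hA hξ)
  have himageu : ¬ (f '' A).Countable := fun hc =>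
    hAu (countable_of_injective_of_countable_image hf.injective.injOn hc)
  obtain ⟨A', hA'sub, hA'u, hA'C⟩ := hC.exists_subset_not_countable (himage.trans hA₁) himageu
  obtain ⟨δ, hδS, hδ⟩ := hguess A' ((hA'sub.trans himage).trans hA₁) hA'u
  obtain ⟨hmono, hlt, hcof⟩ := hgood δ hδS
  have hδC : δ ∈ C := hA'C δ (hS hδS) (cofinalBelow_of_le_liminf_hitRatio ha hmono hlt hcof hδ)
  have hinf : {k | α δ k ∈ range f}.Infinite :=
    (infinite_of_le_liminf_hitRatio ha hδ).mono fun k hk => image_subset_range f A (hA'sub hk)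
  refine ⟨δ, honly δ hδS (hδ.trans (liminf_hitRatio_mono (hA'sub.trans himage))), ?_⟩
  calc a ≤ liminf (hitRatio (α δ) A') atTop := hδ
    _ ≤ liminf (hitRatio (α δ) (f '' A)) atTop := liminf_hitRatio_mono hA'sub
    _ ≤ liminf (hitRatio (β δ) A) atTop := by
      simp only [β, if_pos (And.intro hδC hinf)]
      exact liminf_hitRatio_image_le hf.injective hinf A

theorem clubSuitInf_union_general (a : ℝ) (ha0 : 0 < a)
    (S S₁ S₂ : Set Ordinal.{0}) (hS : S ⊆ limOmega1)
    (hunion : S = S₁ ∪ S₂) (h : ClubSuitInf S a) :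
    (IsStatIn S₁ ∧ ClubSuitInf S₁ a) ∨ (IsStatIn S₂ ∧ ClubSuitInf S₂ a) := by
  subst hunion
  obtain ⟨α, hgood, hguess⟩ := h
  have hstat {T} (hT : T ⊆ S₁ ∪ S₂) (hT' : ClubSuitInf T a) : IsStatIn T ∧ ClubSuitInf T a :=
    ⟨hT'.isStatIn (hT.trans hS) ha0, hT'⟩
  by_cases h₁ : Guesses S₁ a α
  · exact .inl (hstat subset_union_left ⟨α, fun δ hδ => hgood δ (.inl hδ), h₁⟩)
  · obtain ⟨A₁, hA₁, hA₁u, hA₁S₁⟩ : ∃ A₁ ⊆ Iio omega1, ¬ A₁.Countable ∧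
        ∀ δ ∈ S₁, liminf (hitRatio (α δ) A₁) atTop < a := by
      simpa [Guesses] using h₁
    refine .inr (hstat subset_union_right (clubSuitInf_of_guesses_only_in ha0 hS
      subset_union_right hgood hguess hA₁ hA₁u fun δ hδ hδA₁ => ?_))
    exact hδ.resolve_left fun hδ₁ => (hA₁S₁ δ hδ₁).not_ge hδA₁

/-- Lemma 6.5: if `♣_S^{inf ≥ a}` holds and `S = S₁ ∪ S₂`, then the principle holds
on `S₁` or on `S₂` (where the principle on a non-stationary index set is taken to fail,
i.e. the successful part is moreover stationary). -/
theorem clubSuitInf_union (a : ℝ) (ha0 : 0 < a) (ha1 : a ≤ 1)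
    (S S₁ S₂ : Set Ordinal.{0}) (hS : S ⊆ limOmega1) (hstat : IsStatIn S)
    (hunion : S = S₁ ∪ S₂) (h : ClubSuitInf S a) :
    (IsStatIn S₁ ∧ ClubSuitInf S₁ a) ∨ (IsStatIn S₂ ∧ ClubSuitInf S₂ a) :=
  clubSuitInf_union_general a ha0 S S₁ S₂ hS hunion h
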